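/- Let E and Z be real inner product spaces, h : E → Z → E any function, s : Z → ℝ any function, z_i ≠ z_j latent codes in Z, and 0 < α ≤ 1. Set z_k = z_i + α • (z_j − z_i), and define the ShapeFlow flow fields f^{ij}(x, t) = s((z_j − z_i)/‖z_j − z_i‖) · ‖z_j − z_i‖ · h x (z_i + t • (z_j − z_i)) and f^{ik}(x, t) = s((z_k − z_i)/‖z_k − z_i‖) · ‖z_k − z_i‖ · h x (z_i + t • (z_k − z_i)). If γ : ℝ → E solves x' = f^{ij}(x, t) on [0, α] (for every t ∈ [0, α], γ has derivative f^{ij}(γ t, t) at t), then the rescaled curve η defined by η t = γ (α t) solves x' = f^{ik}(x, t) on [0, 1]: for every t ∈ [0,1], η has derivative f^{ik}(η t, t) at t. In particular, deforming for time α from z_i toward z_j coincides with deforming for time 1 from z_i toward the intermediate latent code z_k. -/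

import Mathlib

/-! The flow field of `ShapeFlow` depends on the latent direction `d = z_j - z_i` only through
its normalization, which is invariant under `d ↦ α • d` for `α > 0`, and its norm, which scales by
`α`. So replacing `d` by `α • d` multiplies the field by `α` and reparametrizes time by
`t ↦ α * t`. The chain rule for `t ↦ γ (α * t)` produces exactly that factor `α`. -/

open NormedSpace

section

variable {E Z : Type*} [NormedAddCommGroup E] [NormedSpace ℝ E]
  [NormedAddCommGroup Z] [NormedSpace ℝ Z]

/-- The field `f^{ij}` of the paper is `shapeFlowField h s z_i (z_j - z_i)`. -/
noncomputable def shapeFlowField (h : E → Z → E) (s : Z → ℝ) (z₀ d : Z) (x : E) (t : ℝ) : E :=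
  (s (normalize d) * ‖d‖) • h x (z₀ + t • d)

theorem shapeFlowField_smul_direction (h : E → Z → E) (s : Z → ℝ) (z₀ d : Z) (x : E) (t : ℝ)
    {c : ℝ} (hc : 0 ≤ c) :
    shapeFlowField h s z₀ (c • d) x t = c • shapeFlowField h s z₀ d x (c * t) := by
  rcases hc.eq_or_lt with rfl | hc
  · simp [shapeFlowField]
  · simp only [shapeFlowField, normalize_smul_of_pos hc, norm_smul, Real.norm_of_nonneg hc.le,
      smul_smul, mul_comm t c]
    ring_nf

theorem HasDerivAt.comp_const_mul {f : ℝ → E} {f' : E} {c t : ℝ} (hf : HasDerivAt f f' (c * t)) :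
    HasDerivAt (fun t => f (c * t)) (c • f') t :=
  hf.scomp t (hasDerivAt_const_mul c)

end

theorem shapeflow_latent_consistency_general
    {E Z : Type*} [NormedAddCommGroup E] [InnerProductSpace ℝ E]
    [NormedAddCommGroup Z] [InnerProductSpace ℝ Z]
    (h : E → Z → E) (s : Z → ℝ)
    (zi zj : Z)
    (α : ℝ) (hα0 : 0 < α)
    (γ : ℝ → E)
    (hγ : ∀ t ∈ Set.Icc (0 : ℝ) α,
      HasDerivAt γ
        ((s (‖zj - zi‖⁻¹ • (zj - zi)) * ‖zj - zi‖) • h (γ t) (zi + t • (zj - zi))) t) :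
    ∀ t ∈ Set.Icc (0 : ℝ) 1,
      HasDerivAt (fun t => γ (α * t))
        ((s (‖(zi + α • (zj - zi)) - zi‖⁻¹ • ((zi + α • (zj - zi)) - zi)) *
            ‖(zi + α • (zj - zi)) - zi‖) •
          h (γ (α * t)) (zi + t • ((zi + α • (zj - zi)) - zi))) t := by
  intro t ht
  have hflow : ∀ u ∈ Set.Icc (0 : ℝ) α,
      HasDerivAt γ (shapeFlowField h s zi (zj - zi) (γ u) u) u := hγ
  have hmem : α * t ∈ Set.Icc (0 : ℝ) α :=
    ⟨mul_nonneg hα0.le ht.1, mul_le_of_le_one_right hα0.le ht.2⟩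
  have hrescaled := (hflow (α * t) hmem).comp_const_mul
  rw [← shapeFlowField_smul_direction h s zi (zj - zi) _ t hα0.le] at hrescaled
  rw [add_sub_cancel_left]
  exact hrescaled

/-- **Consistency of the latent space (Section 3.1).** Let `z_k = z_i + α • (z_j - z_i)`
with `0 < α ≤ 1` and `z_i ≠ z_j`. If `γ` solves `x' = f^{ij} (x, t)` on `[0, α]`, where
`f^{ij} (x, t) = s ((z_j - z_i)/‖z_j - z_i‖) * ‖z_j - z_i‖ • h x (z_i + t • (z_j - z_i))`,
then the rescaled curve `t ↦ γ (α * t)` solves `x' = f^{ik} (x, t)` on `[0, 1]`: deforming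
for time `α` from `z_i` toward `z_j` coincides with deforming for time `1` from `z_i`
toward the intermediate latent code `z_k`. -/
theorem shapeflow_latent_consistency
    {E Z : Type*} [NormedAddCommGroup E] [InnerProductSpace ℝ E]
    [NormedAddCommGroup Z] [InnerProductSpace ℝ Z]
    (h : E → Z → E) (s : Z → ℝ)
    (zi zj : Z) (hne : zi ≠ zj)
    (α : ℝ) (hα0 : 0 < α) (hα1 : α ≤ 1)
    (γ : ℝ → E)
    (hγ : ∀ t ∈ Set.Icc (0 : ℝ) α,
      HasDerivAt γ
        ((s (‖zj - zi‖⁻¹ • (zj - zi)) * ‖zj - zi‖) • h (γ t) (zi + t • (zj - zi))) t) :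
    ∀ t ∈ Set.Icc (0 : ℝ) 1,
      HasDerivAt (fun t => γ (α * t))
        ((s (‖(zi + α • (zj - zi)) - zi‖⁻¹ • ((zi + α • (zj - zi)) - zi)) *
            ‖(zi + α • (zj - zi)) - zi‖) •
          h (γ (α * t)) (zi + t • ((zi + α • (zj - zi)) - zi))) t :=
  shapeflow_latent_consistency_general h s zi zj α hα0 γ hγ
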